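/- Let Γ be a commutative thick weakly distance-regular digraph and J ⊆ T = {t : (1,t-1) ∈ ∂̃(Γ)}. Let Δ_J be the subdigraph on the block F_J(x) (the minimum closed subset generated by {Γ_{1,t-1}}_{t∈J}, applied at x) with arcs ∪_{t∈J} Γ_{1,t-1}. If for all vertices x,y,x',y' of Δ_J with ∂̃_{Δ_J}(x,y) = ∂̃_{Δ_J}(x',y') one has ∂_Γ(x,y) = ∂_Γ(x',y'), then Δ_J is a thick weakly distance-regular digraph. -/

import Mathlib

/-!
Common framework: commutative thick weakly distance-regular digraphs.
-/

variable {V : Type*}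

/-- There is a directed walk of length `n` from `x` to `y`. -/
def HasWalk (adj : V → V → Prop) (x y : V) (n : ℕ) : Prop :=
  ∃ f : ℕ → V, f 0 = x ∧ f n = y ∧ ∀ i < n, adj (f i) (f (i + 1))

/-- Directed distance `∂(x,y)`. -/
noncomputable def ddist (adj : V → V → Prop) (x y : V) : ℕ :=
  sInf {n | HasWalk adj x y n}

/-- Two-way distance `∂̃(x,y) = (∂(x,y), ∂(y,x))`. -/
noncomputable def tdist (adj : V → V → Prop) (x y : V) : ℕ × ℕ :=
  (ddist adj x y, ddist adj y x)

/-- The pair `i` is an attained two-way distance, i.e. `i ∈ ∂̃(Γ)`. -/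
def Attained (adj : V → V → Prop) (i : ℕ × ℕ) : Prop :=
  ∃ x y : V, tdist adj x y = i

/-- Intersection number `p^h_{i,j}`: for attained `h` it is the common cardinality of
`{z | ∂̃(x,z) = i, ∂̃(z,y) = j}` over pairs with `∂̃(x,y) = h` (and `0` otherwise). -/
noncomputable def pnum (adj : V → V → Prop) (h i j : ℕ × ℕ) : ℕ :=
  sSup {n | ∃ x y : V, tdist adj x y = h ∧
    n = Set.ncard {z : V | tdist adj x z = i ∧ tdist adj z y = j}}

/-- Valency `k_i = |Γ_i(x)|`. -/
noncomputable def kval (adj : V → V → Prop) (i : ℕ × ℕ) : ℕ :=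
  pnum adj (0, 0) i i.swap

/-- Adjacency of the subdigraph `Δ_J`: arcs of type `(1, t-1)` for `t ∈ J`. -/
def deltaAdj (adj : V → V → Prop) (J : Set ℕ) (u v : V) : Prop :=
  ∃ t ∈ J, tdist adj u v = (1, t - 1)

/-- A circuit of length `s`. -/
def IsCircuit (adj : V → V → Prop) (s : ℕ) (f : ℕ → V) : Prop :=
  0 < s ∧ f s = f 0 ∧ ∀ i < s, adj (f i) (f (i + 1))

/-- Strongly connected. -/
def IsStrong (adj : V → V → Prop) : Prop :=
  ∀ x y : V, ∃ n, HasWalk adj x y n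

/-- Weakly distance-regular: the intersection numbers are well defined. -/
def IsWDR (adj : V → V → Prop) : Prop :=
  ∀ (i j : ℕ × ℕ) (x y x' y' : V), tdist adj x y = tdist adj x' y' →
    Set.ncard {z : V | tdist adj x z = i ∧ tdist adj z y = j}
      = Set.ncard {z : V | tdist adj x' z = i ∧ tdist adj z y' = j}

/-- Thick: `p^h_{i,i}, p^h_{i,i*} ∈ {0, k_i}`. -/
def IsThick (adj : V → V → Prop) : Prop :=
  ∀ h i : ℕ × ℕ,
    (pnum adj h i i = 0 ∨ pnum adj h i i = kval adj i) ∧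
    (pnum adj h i i.swap = 0 ∨ pnum adj h i i.swap = kval adj i)

/-- A thick weakly distance-regular digraph (as a property of an adjacency relation). -/
def IsWDRThick (adj : V → V → Prop) : Prop :=
  IsStrong adj ∧ IsWDR adj ∧ IsThick adj

/-- A commutative thick weakly distance-regular digraph. -/
structure CTWDR (V : Type*) [Fintype V] where
  adj : V → V → Prop
  loopless : ∀ v, ¬ adj v v
  strong : IsStrong adj
  wdr : IsWDR adj
  comm : ∀ (i j : ℕ × ℕ) (x y : V),
    Set.ncard {z : V | tdist adj x z = i ∧ tdist adj z y = j}
      = Set.ncard {z : V | tdist adj x z = j ∧ tdist adj z y = i}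
  thick : IsThick adj

namespace CTWDR

variable {V : Type*} [Fintype V] (G : CTWDR V)

/-- Product `EF` of two sets of relations (relations identified with two-way distances). -/
def prodS (E F : Set (ℕ × ℕ)) : Set (ℕ × ℕ) :=
  {h | ∃ i ∈ E, ∃ j ∈ F, pnum G.adj h i j ≠ 0}

/-- Powers `Γ_i^l` (with `Γ_i^0 = {Γ_{(0,0)}}` and `Γ_i^1 = {Γ_i}`). -/
def pow (i : ℕ × ℕ) : ℕ → Set (ℕ × ℕ)
  | 0 => {(0, 0)}
  | 1 => {i}
  | n + 2 => G.prodS (pow i (n + 1)) {i}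

/-- The pair `(1, s-1)` is pure: every circuit of length `s` containing an arc of type
`(1, s-1)` consists of arcs of type `(1, s-1)`. -/
def Pure (s : ℕ) : Prop :=
  ∀ f : ℕ → V, IsCircuit G.adj s f →
    (∃ i < s, tdist G.adj (f i) (f (i + 1)) = (1, s - 1)) →
    ∀ i < s, tdist G.adj (f i) (f (i + 1)) = (1, s - 1)

/-- `(1, s-1)` is mixed. -/
def Mixed (s : ℕ) : Prop := ¬ G.Pure s

/-- Configuration `C(q)` exists. -/
def Cexists (q : ℕ) : Prop :=
  pnum G.adj (1, q - 2) (1, q - 1) (1, q - 1) ≠ 0 ∧ G.Pure (q - 1)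

/-- Configuration `D(q)` exists. -/
def Dexists (q : ℕ) : Prop :=
  pnum G.adj (1, q - 1) (1, q - 2) (q - 2, 1) ≠ 0 ∧ G.Pure (q - 1)

/-- A closed set of relations: `Γ_{i*}Γ_j ⊆ F` for all `i, j ∈ F`. -/
def Closed (F : Set (ℕ × ℕ)) : Prop :=
  ∀ i ∈ F, ∀ j ∈ F, G.prodS {i.swap} {j} ⊆ F

/-- The minimal closed set `⟨F⟩` containing `F`. -/
def genClosed (F : Set (ℕ × ℕ)) : Set (ℕ × ℕ) :=
  ⋂₀ {C | F ⊆ C ∧ G.Closed C}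

/-- The block `F_J(x)` of the closed set generated by `{Γ_{1,t-1}}_{t ∈ J}`. -/
def block (J : Set ℕ) (x : V) : Set V :=
  {y | tdist G.adj x y ∈ G.genClosed {i | ∃ t ∈ J, i = (1, t - 1)}}

end CTWDR

/-!
On the block `F_J(x₀)` the two-way distance of `Δ_J` is a function of the two-way distance of
`Γ`: a walk of `Δ_J` can be transported arc by arc to any pair of vertices of the block in the same
`Γ`-relation, since `Γ` is weakly distance-regular and `⟨F_J⟩` is closed. The hypothesis makes this
function injective, so every set counted by an intersection number of `Δ_J` is a set counted by an
intersection number of `Γ`; weak distance-regularity and thickness are inherited from `Γ`.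
As for strong connectivity, `Δ_J` is weakly connected, its out-degrees are all equal and so are
its in-degrees, and in a finite digraph with in-degree equal to out-degree at every vertex
reachability is symmetric.
-/

section Walks

variable {W : Type*} {adj : W → W → Prop} {x y : W}

lemma hasWalk_zero_iff : HasWalk adj x y 0 ↔ x = y := by
  constructor
  · rintro ⟨f, rfl, rfl, -⟩
    rfl
  · rintro rfl
    exact ⟨fun _ => x, rfl, rfl, fun i hi => absurd hi (Nat.not_lt_zero i)⟩

lemma hasWalk_succ_iff {n : ℕ} :
    HasWalk adj x y (n + 1) ↔ ∃ w, adj x w ∧ HasWalk adj w y n := by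
  constructor
  · rintro ⟨f, rfl, rfl, hf⟩
    exact ⟨f 1, hf 0 n.succ_pos, fun i => f (i + 1), rfl, rfl,
      fun i hi => hf (i + 1) (by omega)⟩
  · rintro ⟨w, hxw, f, rfl, rfl, hf⟩
    refine ⟨fun i => Nat.casesOn (motive := fun _ => W) i x f, rfl, rfl, fun i hi => ?_⟩
    cases i with
    | zero => exact hxw
    | succ i => exact hf i (by omega)

lemma exists_hasWalk_iff_reflTransGen :
    (∃ n, HasWalk adj x y n) ↔ Relation.ReflTransGen adj x y := by
  constructor
  · rintro ⟨n, hn⟩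
    induction n generalizing x with
    | zero => exact hasWalk_zero_iff.mp hn ▸ .refl
    | succ n ih =>
      obtain ⟨w, hxw, hw⟩ := hasWalk_succ_iff.mp hn
      exact .head hxw (ih hw)
  · intro h
    induction h using Relation.ReflTransGen.head_induction_on with
    | refl => exact ⟨0, hasWalk_zero_iff.mpr rfl⟩
    | head hxw _ ih =>
      obtain ⟨n, hn⟩ := ih
      exact ⟨n + 1, hasWalk_succ_iff.mpr ⟨_, hxw, hn⟩⟩

lemma ddist_self (adj : W → W → Prop) (x : W) : ddist adj x x = 0 :=
  Nat.eq_zero_of_le_zero (Nat.sInf_le (hasWalk_zero_iff.mpr rfl))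

lemma tdist_self (adj : W → W → Prop) (x : W) : tdist adj x x = (0, 0) := by
  simp [tdist, ddist_self]

lemma tdist_swap (adj : W → W → Prop) (x y : W) : tdist adj y x = (tdist adj x y).swap :=
  rfl

lemma eq_of_ddist_eq_zero (hxy : ∃ n, HasWalk adj x y n) (h : ddist adj x y = 0) : x = y := by
  have hmem : ddist adj x y ∈ {n | HasWalk adj x y n} := Nat.sInf_mem hxy
  rw [h] at hmem
  exact hasWalk_zero_iff.mp hmem

end Walks

section IntersectionNumbers

variable {W : Type*} {adj : W → W → Prop} {h i j : ℕ × ℕ} {x y x' y' z : W}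

lemma exists_of_pnum_ne_zero (hp : pnum adj h i j ≠ 0) :
    ∃ x y z, tdist adj x y = h ∧ tdist adj x z = i ∧ tdist adj z y = j := by
  by_contra! hc
  refine hp (Nat.eq_zero_of_le_zero (csSup_le' ?_))
  rintro n ⟨x, y, hxy, rfl⟩
  have : {z | tdist adj x z = i ∧ tdist adj z y = j} = ∅ :=
    Set.eq_empty_of_forall_notMem fun z hz => hc x y z hxy hz.1 hz.2
  rw [this, Set.ncard_empty]

namespace IsWDR

variable (hw : IsWDR adj)
include hw

lemma pnum_eq_ncard (hxy : tdist adj x y = h) :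
    pnum adj h i j = {z | tdist adj x z = i ∧ tdist adj z y = j}.ncard := by
  have : {n | ∃ x' y' : W, tdist adj x' y' = h ∧
      n = {z | tdist adj x' z = i ∧ tdist adj z y' = j}.ncard}
      = {{z | tdist adj x z = i ∧ tdist adj z y = j}.ncard} := by
    ext n
    constructor
    · rintro ⟨x', y', hxy', rfl⟩
      exact hw i j x' y' x y (hxy'.trans hxy.symm)
    · rintro rfl
      exact ⟨x, y, hxy, rfl⟩
  rw [pnum, this, csSup_singleton]

lemma exists_of_pnum_ne_zero (hxy : tdist adj x y = h) (hp : pnum adj h i j ≠ 0) :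
    ∃ z, tdist adj x z = i ∧ tdist adj z y = j := by
  rw [hw.pnum_eq_ncard hxy] at hp
  exact Set.nonempty_of_ncard_ne_zero hp

variable [Finite W]

lemma pnum_ne_zero (hxy : tdist adj x y = h) (hxz : tdist adj x z = i)
    (hzy : tdist adj z y = j) : pnum adj h i j ≠ 0 := by
  rw [hw.pnum_eq_ncard hxy]
  have hz : z ∈ {z | tdist adj x z = i ∧ tdist adj z y = j} := ⟨hxz, hzy⟩
  exact ((Set.ncard_pos (Set.toFinite _)).mpr ⟨z, hz⟩).ne'

lemma exists_of_tdist_eq (hxy : tdist adj x y = tdist adj x' y') (hxz : tdist adj x z = i)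
    (hzy : tdist adj z y = j) : ∃ z', tdist adj x' z' = i ∧ tdist adj z' y' = j :=
  hw.exists_of_pnum_ne_zero hxy.symm (hw.pnum_ne_zero rfl hxz hzy)

lemma ncard_eq_of_tdist_eq (P : ℕ × ℕ → ℕ × ℕ → Prop) (hxy : tdist adj x y = tdist adj x' y') :
    {z | P (tdist adj x z) (tdist adj z y)}.ncard
      = {z | P (tdist adj x' z) (tdist adj z y')}.ncard := by
  have := Fintype.ofFinite W
  classical
  let D : Finset (ℕ × ℕ) := Finset.univ.image fun p : W × W => tdist adj p.1 p.2
  let T := (D ×ˢ D).filter fun q => P q.1 q.2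
  have hsum : ∀ a b : W, {z | P (tdist adj a z) (tdist adj z b)}.ncard
      = ∑ q ∈ T, {z | tdist adj a z = q.1 ∧ tdist adj z b = q.2}.ncard := by
    intro a b
    rw [Set.ncard_eq_toFinset_card', Finset.card_eq_sum_card_fiberwise
      (f := fun z => (tdist adj a z, tdist adj z b)) (t := T)]
    · refine Finset.sum_congr rfl fun q hq => ?_
      rw [Set.ncard_eq_toFinset_card']
      congr 1
      ext z
      simp only [Set.toFinset_ofPred, Finset.mem_filter, Finset.mem_univ, true_and, T] at hq ⊢
      constructor
      · rintro ⟨-, rfl⟩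
        exact ⟨rfl, rfl⟩
      · rintro ⟨h1, h2⟩
        exact ⟨h1 ▸ h2 ▸ hq.2, Prod.ext h1 h2⟩
    · intro z hz
      exact Finset.mem_filter.mpr ⟨Finset.mem_product.mpr
        ⟨Finset.mem_image_of_mem _ (Finset.mem_univ (a, z)),
          Finset.mem_image_of_mem _ (Finset.mem_univ (z, b))⟩, by simpa using hz⟩
  rw [hsum x y, hsum x' y']
  exact Finset.sum_congr rfl fun q _ => hw _ _ _ _ _ _ hxy

end IsWDR

end IntersectionNumbers

section Balanced

variable {W : Type*} [Finite W] {E : W → W → Prop}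

lemma ncard_out_eq_ncard_in_of_const
    (hout : ∀ u u', {v | E u v}.ncard = {v | E u' v}.ncard)
    (hin : ∀ v v', {u | E u v}.ncard = {u | E u v'}.ncard) (w : W) :
    {v | E w v}.ncard = {u | E u w}.ncard := by
  have := Fintype.ofFinite W
  classical
  have hsum : ∑ u, {v | E u v}.ncard = ∑ v, {u | E u v}.ncard := by
    simp only [Set.ncard_eq_toFinset_card', Set.toFinset_ofPred, Finset.card_filter]
    exact Finset.sum_comm
  rw [Finset.sum_congr rfl fun u _ => hout u w, Finset.sum_congr rfl fun v _ => hin v w,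
    Finset.sum_const, Finset.sum_const, smul_eq_mul, smul_eq_mul] at hsum
  exact Nat.eq_of_mul_eq_mul_left (Finset.card_pos.mpr ⟨w, Finset.mem_univ w⟩) hsum

/-- The arcs with tail in `S` all end in `S`, and are as many as the arcs ending in `S`. -/
lemma mem_of_adj_of_forall_adj_mem (hbal : ∀ w, {v | E w v}.ncard = {u | E u w}.ncard)
    {S : Set W} (hS : ∀ u ∈ S, ∀ v, E u v → v ∈ S) {u v : W} (hv : v ∈ S) (huv : E u v) :
    u ∈ S := by
  have := Fintype.ofFinite W
  classical
  let out (w : W) : Finset W := Finset.univ.filter (E w)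
  let inS (w : W) : Finset W := S.toFinset.filter (E · w)
  let into (w : W) : Finset W := Finset.univ.filter (E · w)
  have hbal' : ∀ w, (out w).card = (into w).card := by
    intro w
    simpa only [Set.ncard_eq_toFinset_card', Set.toFinset_ofPred] using hbal w
  have hsub : ∀ w, inS w ⊆ into w :=
    fun w => Finset.filter_subset_filter _ (Finset.subset_univ _)
  have hcount : ∑ w ∈ S.toFinset, (inS w).card = ∑ w ∈ S.toFinset, (into w).card := by
    calc ∑ w ∈ S.toFinset, (inS w).card
        = ∑ w ∈ S.toFinset, (S.toFinset.filter (E w)).card := by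
          simp only [inS, Finset.card_filter]
          exact Finset.sum_comm
      _ = ∑ w ∈ S.toFinset, (out w).card := by
          refine Finset.sum_congr rfl fun w hw => congrArg Finset.card ?_
          ext x
          simp only [out, Finset.mem_filter, Finset.mem_univ, true_and, Set.mem_toFinset]
          exact ⟨And.right, fun hx => ⟨hS w (Set.mem_toFinset.mp hw) x hx, hx⟩⟩
      _ = ∑ w ∈ S.toFinset, (into w).card := Finset.sum_congr rfl fun w _ => hbal' w
  have hv' : inS v = into v :=
    Finset.eq_of_subset_of_card_le (hsub v) ((Finset.sum_eq_sum_iff_of_le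
      fun w _ => Finset.card_le_card (hsub w)).mp hcount v (Set.mem_toFinset.mpr hv)).ge
  have hu : u ∈ inS v := hv' ▸ Finset.mem_filter.mpr ⟨Finset.mem_univ u, huv⟩
  exact Set.mem_toFinset.mp (Finset.mem_filter.mp hu).1

lemma equivalence_reflTransGen_of_balanced
    (hbal : ∀ w, {v | E w v}.ncard = {u | E u w}.ncard) :
    Equivalence (Relation.ReflTransGen E) where
  refl _ := .refl
  symm h := by
    induction h with
    | refl => exact .refl
    | @tail b c _ hbc ih =>
      exact .trans (mem_of_adj_of_forall_adj_mem hbal (S := {w | Relation.ReflTransGen E c w})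
        (fun _ hu _ huv => hu.tail huv) .refl hbc) ih
  trans := .trans

end Balanced

namespace CTWDR

variable {V : Type*} [Fintype V] (G : CTWDR V)

lemma subset_genClosed (F : Set (ℕ × ℕ)) : F ⊆ G.genClosed F :=
  fun _ hi => Set.mem_sInter.mpr fun _ hC => hC.1 hi

lemma closed_genClosed (F : Set (ℕ × ℕ)) : G.Closed (G.genClosed F) :=
  fun i hi j hj _ hh => Set.mem_sInter.mpr fun C hC =>
    hC.2 i (Set.mem_sInter.mp hi C hC) j (Set.mem_sInter.mp hj C hC) hh

lemma genClosed_subset {F C : Set (ℕ × ℕ)} (hFC : F ⊆ C) (hC : G.Closed C) :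
    G.genClosed F ⊆ C :=
  Set.sInter_subset_of_mem ⟨hFC, hC⟩

variable {G} {F : Set (ℕ × ℕ)} {h i j : ℕ × ℕ}

lemma mem_genClosed_of_pnum_ne_zero (hi : i ∈ G.genClosed F) (hj : j ∈ G.genClosed F)
    (hp : pnum G.adj h i.swap j ≠ 0) : h ∈ G.genClosed F :=
  G.closed_genClosed F i hi j hj ⟨i.swap, rfl, j, rfl, hp⟩

lemma tdist_mem_genClosed {x y z : V} (hzx : tdist G.adj z x ∈ G.genClosed F)
    (hzy : tdist G.adj z y ∈ G.genClosed F) : tdist G.adj x y ∈ G.genClosed F :=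
  mem_genClosed_of_pnum_ne_zero hzx hzy (G.wdr.pnum_ne_zero rfl rfl rfl)

lemma attained_of_mem_genClosed (hF : ∀ i ∈ F, Attained G.adj i) (hi : i ∈ G.genClosed F) :
    Attained G.adj i := by
  refine G.genClosed_subset (C := {i | Attained G.adj i}) hF ?_ hi
  rintro _ - _ - _ ⟨_, -, _, -, hp⟩
  obtain ⟨x, y, -, hxy, -⟩ := exists_of_pnum_ne_zero hp
  exact ⟨x, y, hxy⟩

lemma swap_mem_genClosed (hF : ∀ i ∈ F, Attained G.adj i) (hi : i ∈ G.genClosed F) :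
    i.swap ∈ G.genClosed F := by
  obtain ⟨x, y, rfl⟩ := attained_of_mem_genClosed hF hi
  have hyy : tdist G.adj y y ∈ G.genClosed F := tdist_mem_genClosed hi hi
  rw [tdist_self] at hyy
  exact tdist_mem_genClosed (x := y) (y := x) hi (tdist_self G.adj x ▸ hyy)

def arcTypes (J : Set ℕ) : Set (ℕ × ℕ) := {i | ∃ t ∈ J, i = (1, t - 1)}

variable {J : Set ℕ} {x0 : V}

lemma attained_of_mem_arcTypes (hJ : ∀ t ∈ J, Attained G.adj (1, t - 1)) :
    ∀ i ∈ arcTypes J, Attained G.adj i := by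
  rintro - ⟨t, ht, rfl⟩
  exact hJ t ht

lemma tdist_mem_of_mem_block {a b : V} (ha : a ∈ G.block J x0) (hb : b ∈ G.block J x0) :
    tdist G.adj a b ∈ G.genClosed (arcTypes J) :=
  tdist_mem_genClosed ha hb

lemma mem_block_of_tdist_mem (hJ : ∀ t ∈ J, Attained G.adj (1, t - 1)) {a z : V}
    (ha : a ∈ G.block J x0) (haz : tdist G.adj a z ∈ G.genClosed (arcTypes J)) :
    z ∈ G.block J x0 :=
  tdist_mem_genClosed (swap_mem_genClosed (attained_of_mem_arcTypes hJ) ha) haz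

/-- The arc relation of `Δ_J`, on the vertex set `F_J(x₀)`. -/
def blockAdj (G : CTWDR V) (J : Set ℕ) (x0 : V) (u v : G.block J x0) : Prop :=
  deltaAdj G.adj J u v

def DdistDetermined (G : CTWDR V) (J : Set ℕ) (x0 : V) : Prop :=
  ∀ a b a' b' : G.block J x0, tdist (blockAdj G J x0) a b = tdist (blockAdj G J x0) a' b' →
    ddist G.adj a b = ddist G.adj a' b'

variable {u v u' v' : G.block J x0}

local notation "Δ" => blockAdj G J x0

section Transfer

variable (hJ : ∀ t ∈ J, Attained G.adj (1, t - 1))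
include hJ

/-- A walk of `Δ_J` is transported arc by arc, each new vertex being found by weak
distance-regularity of `Γ` and lying in the block because `⟨F_J⟩` is closed. -/
lemma hasWalk_blockAdj_of_tdist_eq {n : ℕ} (h : tdist G.adj u v = tdist G.adj u' v')
    (hw : HasWalk Δ u v n) : HasWalk Δ u' v' n := by
  induction n generalizing u u' with
  | zero =>
    obtain rfl := hasWalk_zero_iff.mp hw
    rw [tdist_self] at h
    exact hasWalk_zero_iff.mpr
      (Subtype.ext (eq_of_ddist_eq_zero (G.strong _ _) (congrArg Prod.fst h.symm)))
  | succ n ih =>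
    obtain ⟨w, huw, hw⟩ := hasWalk_succ_iff.mp hw
    obtain ⟨z, hu'z, hzv'⟩ := G.wdr.exists_of_tdist_eq h (z := w.1) rfl rfl
    have hz : z ∈ G.block J x0 :=
      mem_block_of_tdist_mem hJ u'.2 (hu'z ▸ tdist_mem_of_mem_block u.2 w.2)
    have hu'z' : Δ u' ⟨z, hz⟩ := by
      simpa only [blockAdj, deltaAdj, hu'z] using huw
    exact hasWalk_succ_iff.mpr ⟨⟨z, hz⟩, hu'z', ih hzv'.symm hw⟩

lemma ddist_blockAdj_eq_of_tdist_eq (h : tdist G.adj u v = tdist G.adj u' v') :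
    ddist Δ u v = ddist Δ u' v' :=
  congrArg sInf (Set.ext fun _ =>
    ⟨hasWalk_blockAdj_of_tdist_eq hJ h, hasWalk_blockAdj_of_tdist_eq hJ h.symm⟩)

lemma tdist_blockAdj_eq_of_tdist_eq (h : tdist G.adj u v = tdist G.adj u' v') :
    tdist Δ u v = tdist Δ u' v' :=
  Prod.ext (ddist_blockAdj_eq_of_tdist_eq hJ h)
    (ddist_blockAdj_eq_of_tdist_eq hJ (u := v) (v := u) (u' := v') (v' := u')
      (congrArg Prod.swap h))

end Transfer

lemma tdist_eq_of_tdist_blockAdj_eq (hyp : G.DdistDetermined J x0)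
    (h : tdist Δ u v = tdist Δ u' v') :
    tdist G.adj u v = tdist G.adj u' v' :=
  Prod.ext (hyp u v u' v' h) (hyp v u v' u' (congrArg Prod.swap h))

section Counting

variable (hyp : G.DdistDetermined J x0) (hJ : ∀ t ∈ J, Attained G.adj (1, t - 1))
include hyp hJ

lemma ncard_blockAdj_fiber (a b z0 : G.block J x0) :
    {z : G.block J x0 | tdist Δ a z = tdist Δ a z0 ∧ tdist Δ z b = tdist Δ z0 b}.ncard
      = {z : V | tdist G.adj a z = tdist G.adj a z0 ∧
          tdist G.adj z b = tdist G.adj z0 b}.ncard := by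
  have hset : {z : G.block J x0 | tdist Δ a z = tdist Δ a z0 ∧ tdist Δ z b = tdist Δ z0 b}
      = {z : G.block J x0 | (z : V) ∈ {z : V | tdist G.adj a z = tdist G.adj a z0 ∧
          tdist G.adj z b = tdist G.adj z0 b}} := by
    ext z
    exact ⟨fun h => ⟨tdist_eq_of_tdist_blockAdj_eq hyp h.1,
        tdist_eq_of_tdist_blockAdj_eq hyp h.2⟩,
      fun h => ⟨tdist_blockAdj_eq_of_tdist_eq hJ h.1, tdist_blockAdj_eq_of_tdist_eq hJ h.2⟩⟩
  rw [hset, Set.ncard_subtype, Set.inter_eq_left.mpr]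
  rintro z ⟨hz, -⟩
  exact mem_block_of_tdist_mem hJ a.2 (hz ▸ tdist_mem_of_mem_block a.2 z0.2)

lemma isWDR_blockAdj : IsWDR Δ := by
  have key : ∀ {i j} {a b a' b' : G.block J x0}, tdist Δ a b = tdist Δ a' b' →
      {z | tdist Δ a z = i ∧ tdist Δ z b = j}.Nonempty →
      {z | tdist Δ a z = i ∧ tdist Δ z b = j}.ncard
        = {z | tdist Δ a' z = i ∧ tdist Δ z b' = j}.ncard := by
    rintro i j a b a' b' h ⟨z0, rfl, rfl⟩
    have hG := tdist_eq_of_tdist_blockAdj_eq hyp h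
    obtain ⟨z, hz1, hz2⟩ := G.wdr.exists_of_tdist_eq hG (z := z0.1) rfl rfl
    have hz : z ∈ G.block J x0 :=
      mem_block_of_tdist_mem hJ a'.2 (hz1 ▸ tdist_mem_of_mem_block a.2 z0.2)
    have e1 := tdist_blockAdj_eq_of_tdist_eq hJ (v' := ⟨z, hz⟩) hz1.symm
    have e2 := tdist_blockAdj_eq_of_tdist_eq hJ (u' := ⟨z, hz⟩) hz2.symm
    calc _ = {w : V | tdist G.adj a w = tdist G.adj a z0 ∧
            tdist G.adj w b = tdist G.adj z0 b}.ncard :=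
          ncard_blockAdj_fiber hyp hJ a b z0
      _ = {w : V | tdist G.adj a' w = tdist G.adj a' z ∧
            tdist G.adj w b' = tdist G.adj z b'}.ncard := by
          rw [hz1, hz2]
          exact G.wdr _ _ _ _ _ _ hG
      _ = _ := by
          rw [e1, e2]
          exact (ncard_blockAdj_fiber hyp hJ a' b' ⟨z, hz⟩).symm
  intro i j a b a' b' h
  by_cases hne : {z | tdist Δ a z = i ∧ tdist Δ z b = j}.Nonempty
  · exact key h hne
  by_cases hne' : {z | tdist Δ a' z = i ∧ tdist Δ z b' = j}.Nonempty
  · exact (key h.symm hne').symm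
  rw [Set.not_nonempty_iff_eq_empty.mp hne, Set.not_nonempty_iff_eq_empty.mp hne']

lemma pnum_blockAdj (a b z : G.block J x0) :
    pnum Δ (tdist Δ a b) (tdist Δ a z) (tdist Δ z b)
      = pnum G.adj (tdist G.adj a b) (tdist G.adj a z) (tdist G.adj z b) := by
  rw [(isWDR_blockAdj hyp hJ).pnum_eq_ncard rfl, ncard_blockAdj_fiber hyp hJ,
    G.wdr.pnum_eq_ncard rfl]

lemma kval_blockAdj (a z : G.block J x0) :
    kval Δ (tdist Δ a z) = kval G.adj (tdist G.adj a z) := by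
  have := pnum_blockAdj hyp hJ a a z
  rw [tdist_self, tdist_self] at this
  exact this

lemma isThick_blockAdj : IsThick Δ := by
  have key : ∀ h i j, (j = i ∨ j = i.swap) → pnum Δ h i j = 0 ∨ pnum Δ h i j = kval Δ i := by
    intro h i j hj
    refine or_iff_not_imp_left.mpr fun hp => ?_
    obtain ⟨a, b, z, rfl, rfl, rfl⟩ := exists_of_pnum_ne_zero hp
    rw [pnum_blockAdj hyp hJ, kval_blockAdj hyp hJ]
    rcases hj with hj | hj
    · have hG := tdist_eq_of_tdist_blockAdj_eq hyp hj
      rw [hG]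
      exact (G.thick _ _).1.resolve_left (G.wdr.pnum_ne_zero rfl rfl hG)
    · have hG := tdist_eq_of_tdist_blockAdj_eq hyp (u' := z) (v' := a) hj
      rw [hG]
      exact (G.thick _ _).2.resolve_left (G.wdr.pnum_ne_zero rfl rfl hG)
  exact fun h i => ⟨key h i i (.inl rfl), key h i i.swap (.inr rfl)⟩

end Counting

section Connectivity

variable (hJ : ∀ t ∈ J, Attained G.adj (1, t - 1))
include hJ

lemma ncard_blockAdj_out (u : G.block J x0) :
    {v | Δ u v}.ncard = {v : V | tdist G.adj u v ∈ arcTypes J}.ncard := by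
  refine (Set.ncard_subtype _ {v : V | tdist G.adj u v ∈ arcTypes J}).trans
    (congrArg Set.ncard (Set.inter_eq_left.mpr fun v hv => ?_))
  exact mem_block_of_tdist_mem hJ u.2 (G.subset_genClosed _ hv)

lemma ncard_blockAdj_in (u : G.block J x0) :
    {v | Δ v u}.ncard = {v : V | (tdist G.adj u v).swap ∈ arcTypes J}.ncard := by
  refine (Set.ncard_subtype _ {v : V | (tdist G.adj u v).swap ∈ arcTypes J}).trans
    (congrArg Set.ncard (Set.inter_eq_left.mpr fun v hv => ?_))
  exact mem_block_of_tdist_mem hJ u.2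
    (swap_mem_genClosed (attained_of_mem_arcTypes hJ) (G.subset_genClosed _ hv))

lemma ncard_blockAdj_out_eq_in (w : G.block J x0) :
    {v | Δ w v}.ncard = {u | Δ u w}.ncard := by
  have hself : ∀ u u' : G.block J x0, tdist G.adj u.1 u.1 = tdist G.adj u'.1 u'.1 :=
    fun u u' => (tdist_self _ _).trans (tdist_self _ _).symm
  refine ncard_out_eq_ncard_in_of_const (fun u u' => ?_) (fun u u' => ?_) w
  · rw [ncard_blockAdj_out hJ, ncard_blockAdj_out hJ]
    exact G.wdr.ncard_eq_of_tdist_eq (fun i _ => i ∈ arcTypes J) (hself u u')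
  · rw [ncard_blockAdj_in hJ, ncard_blockAdj_in hJ]
    exact G.wdr.ncard_eq_of_tdist_eq (fun i _ => i.swap ∈ arcTypes J) (hself u u')

/-- `Δ_J` is weakly connected: the relations `i` such that any two vertices of the block in
relation `i` are joined by a zigzag of arcs form a closed set containing the arc types. -/
lemma eqvGen_blockAdj (a b : G.block J x0) : Relation.EqvGen Δ a b := by
  let C : Set (ℕ × ℕ) := {i | i ∈ G.genClosed (arcTypes J) ∧
    ∀ u v : G.block J x0, tdist G.adj u v = i → Relation.EqvGen Δ u v}
  have hC : G.genClosed (arcTypes J) ⊆ C := by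
    refine G.genClosed_subset (fun i hi => ⟨G.subset_genClosed _ hi, fun u v huv => ?_⟩) ?_
    · exact .rel u v (show tdist G.adj u v ∈ arcTypes J from huv ▸ hi)
    rintro i ⟨hiF, hi⟩ j ⟨hjF, hj⟩ h ⟨_, rfl, _, rfl, hp⟩
    refine ⟨mem_genClosed_of_pnum_ne_zero hiF hjF hp, fun u v huv => ?_⟩
    obtain ⟨z, huz, hzv⟩ := G.wdr.exists_of_pnum_ne_zero huv hp
    have hz : z ∈ G.block J x0 := mem_block_of_tdist_mem hJ u.2
      (huz ▸ swap_mem_genClosed (attained_of_mem_arcTypes hJ) hiF)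
    have hzu : tdist G.adj z u = i := by rw [tdist_swap, huz]; rfl
    exact .trans _ ⟨z, hz⟩ _ (.symm _ _ (hi ⟨z, hz⟩ u hzu)) (hj ⟨z, hz⟩ v hzv)
  exact (hC (tdist_mem_of_mem_block a.2 b.2)).2 a b rfl

lemma isStrong_blockAdj : IsStrong Δ := fun a b =>
  exists_hasWalk_iff_reflTransGen.mpr
    ((equivalence_reflTransGen_of_balanced (ncard_blockAdj_out_eq_in hJ)).eqvGen_iff.mp
      ((eqvGen_blockAdj hJ a b).mono fun _ _ => .single))

end Connectivity

end CTWDR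

/-- Lemma 6.6: if in `Δ_J` equal two-way distances force equal
`Γ`-distances, then `Δ_J` is a thick weakly distance-regular digraph. -/
theorem stmt17 {V : Type*} [Fintype V] (G : CTWDR V) (J : Set ℕ)
    (hJ : ∀ t ∈ J, Attained G.adj (1, t - 1)) (x0 : V)
    (hyp : ∀ a b a' b' : ↥(G.block J x0),
      tdist (fun u v : ↥(G.block J x0) => deltaAdj G.adj J u.1 v.1) a b
        = tdist (fun u v : ↥(G.block J x0) => deltaAdj G.adj J u.1 v.1) a' b' →
      ddist G.adj a.1 b.1 = ddist G.adj a'.1 b'.1) :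
    IsWDRThick (fun u v : ↥(G.block J x0) => deltaAdj G.adj J u.1 v.1) :=
  ⟨CTWDR.isStrong_blockAdj hJ, CTWDR.isWDR_blockAdj hyp hJ, CTWDR.isThick_blockAdj hyp hJ⟩
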